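/- Let k ≥ 2 be an integer and let π be the PageRank vector of Γ(k) for α = 1 − 1/k. Writing r = (1 − 1/k)/3, the squared Euclidean norm of π satisfies ‖π‖₂² > π_A² + π_{C1}² + π_{C2}²·(1 − r^{2k})/(1 − r²). -/

import Mathlib

/-- Arc relation of the graph `Γ(k)` on vertex indices `0, ..., k+2`, where
vertex `0` is `C1`, vertex `1` is `C2`, vertex `i+1` is `B_i` for `1 ≤ i ≤ k`,
and vertex `k+2` is `A`.  `PRadj k j i` holds iff there is an arc from `j` to `i`. -/
def PRadj (k j i : ℕ) : Prop :=
  (j = 0 ∧ (i = 0 ∨ i = 1)) ∨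
  (j = 1 ∧ (i = 0 ∨ i = 1 ∨ i = 2)) ∨
  (2 ≤ j ∧ j ≤ k + 1 ∧ (i = 0 ∨ i = 1 ∨ i = j + 1)) ∨
  (j = k + 2 ∧ i = k + 2)

instance (k j i : ℕ) : Decidable (PRadj k j i) := by unfold PRadj; infer_instance

/-- Out-degree of vertex `j` in `Γ(k)`:  `deg(C1) = 2`, `deg(A) = 1`, all others `3`. -/
def PRdeg (k j : ℕ) : ℕ := if j = 0 then 2 else if j = k + 2 then 1 else 3

/-- The PageRank matrix `R_α` of `Γ(k)`:  entry `(i, j)` is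
`α / deg(j) + (1 - α)/(k+3)` if there is an arc from `j` to `i`, and `(1 - α)/(k+3)`
otherwise. -/
noncomputable def PRmat (k : ℕ) (α : ℝ) : Matrix (Fin (k + 3)) (Fin (k + 3)) ℝ :=
  fun i j =>
    if PRadj k j.1 i.1 then α / (PRdeg k j.1 : ℝ) + (1 - α) / ((k : ℝ) + 3)
    else (1 - α) / ((k : ℝ) + 3)

/-- `π` is a PageRank vector of `Γ(k)` for jumping parameter `α`:  it has nonnegative
entries summing to `1` and satisfies `R_α π = π`. -/
def IsPageRank (k : ℕ) (α : ℝ) (π : Fin (k + 3) → ℝ) : Prop :=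
  (∀ v, 0 ≤ π v) ∧ (∑ v, π v = 1) ∧ (PRmat k α).mulVec π = π

/-!
Each `B_i` has a single in-arc, coming from `C2` or `B_{i-1}`, both of out-degree 3, so the
PageRank equation at `B_i` reads `π_{B_i} = r π_{B_{i-1}} + (1 - α)/n` with `r = α/3`. As `α < 1`
the teleportation term is positive, hence `π_{B_i} ≥ r^i π_{C2}` and `π_{B_k} > 0`. Comparing the
squares of `π_{C2}, π_{B_1}, …, π_{B_{k-1}}` with a geometric series gives the bound, and the
left-over term `π_{B_k}²` makes it strict.
-/

open Finset Matrix

lemma PRmat_mulVec_apply (k : ℕ) (α : ℝ) (π : Fin (k + 3) → ℝ) (i : Fin (k + 3)) :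
    (PRmat k α *ᵥ π) i = (1 - α) / ((k : ℝ) + 3) * ∑ j, π j
      + ∑ j : Fin (k + 3), if PRadj k j i then α / (PRdeg k j : ℝ) * π j else 0 := by
  rw [mulVec, dotProduct, mul_sum, ← sum_add_distrib]
  refine sum_congr rfl fun j _ => ?_
  unfold PRmat
  split_ifs <;> ring

lemma PRadj_iff_of_two_le_of_le {k j m : ℕ} (hm : 2 ≤ m) (hmk : m ≤ k + 1) :
    PRadj k j m ↔ j + 1 = m := by
  unfold PRadj; omega

lemma PRdeg_of_pos_of_le {k j : ℕ} (hj : 0 < j) (hjk : j ≤ k) : PRdeg k j = 3 := by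
  unfold PRdeg; split_ifs <;> omega

lemma IsPageRank.apply_add_two {k : ℕ} {α : ℝ} {π : Fin (k + 3) → ℝ}
    (hπ : IsPageRank k α π) {i : ℕ} (hi : i < k) :
    π ⟨i + 2, by omega⟩ = α / 3 * π ⟨i + 1, by omega⟩ + (1 - α) / ((k : ℝ) + 3) := by
  have h := congrFun hπ.2.2 ⟨i + 2, by omega⟩
  have hadj : PRadj k (i + 1) (i + 2) := (PRadj_iff_of_two_le_of_le (by omega) (by omega)).2 rfl
  have hdeg : PRdeg k (i + 1) = 3 := PRdeg_of_pos_of_le (by omega) (by omega)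
  rw [PRmat_mulVec_apply, hπ.2.1, sum_eq_single ⟨i + 1, by omega⟩] at h
  · rw [if_pos hadj, hdeg] at h
    push_cast at h
    linarith
  · intro j _ hj
    have hnadj : ¬ PRadj k j (i + 2) := by
      rw [PRadj_iff_of_two_le_of_le (by omega) (by omega)]
      exact fun h => hj (Fin.ext (by simp only; omega))
    rw [if_neg hnadj]
  · simp

lemma IsPageRank.pow_mul_le {k : ℕ} {α : ℝ} {π : Fin (k + 3) → ℝ} (hπ : IsPageRank k α π)
    (hα0 : 0 ≤ α) (hα1 : α ≤ 1) {i : ℕ} (hi : i ≤ k) :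
    (α / 3) ^ i * π ⟨1, by simp⟩ ≤ π ⟨i + 1, by omega⟩ := by
  induction i with
  | zero => simp
  | succ i ih =>
    have hε : 0 ≤ (1 - α) / ((k : ℝ) + 3) := by
      apply div_nonneg <;> [linarith; positivity]
    rw [hπ.apply_add_two (by omega), pow_succ, mul_comm _ (α / 3), mul_assoc]
    nlinarith [ih (by omega)]

lemma IsPageRank.apply_pos {k : ℕ} {α : ℝ} {π : Fin (k + 3) → ℝ} (hπ : IsPageRank k α π)
    (hα0 : 0 ≤ α) (hα1 : α < 1) {i : ℕ} (hi : 0 < i) (hik : i ≤ k) :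
    0 < π ⟨i + 1, by omega⟩ := by
  obtain ⟨j, rfl⟩ : ∃ j, i = j + 1 := ⟨i - 1, by omega⟩
  rw [hπ.apply_add_two (by omega)]
  have hε : 0 < (1 - α) / ((k : ℝ) + 3) := div_pos (by linarith) (by positivity)
  nlinarith [hπ.1 ⟨j + 1, by omega⟩]

lemma sq_mul_geom_sum_le_sum_sq {n : ℕ} {v : Fin n → ℝ} {a r : ℝ} (ha : 0 ≤ a) (hr : 0 ≤ r)
    (hr1 : r ^ 2 ≠ 1) (h : ∀ i : Fin n, r ^ (i : ℕ) * a ≤ v i) :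
    a ^ 2 * (1 - r ^ (2 * n)) / (1 - r ^ 2) ≤ ∑ i, v i ^ 2 := by
  calc a ^ 2 * (1 - r ^ (2 * n)) / (1 - r ^ 2)
      = ∑ i : Fin n, (r ^ (i : ℕ) * a) ^ 2 := by
        rw [Fin.sum_univ_eq_sum_range (fun i => (r ^ i * a) ^ 2)]
        simp_rw [mul_pow, ← pow_mul, mul_comm _ 2, pow_mul, ← sum_mul, geom_sum_eq hr1]
        have : 1 - r ^ 2 ≠ 0 := sub_ne_zero.2 (Ne.symm hr1)
        have : r ^ 2 - 1 ≠ 0 := sub_ne_zero.2 hr1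
        field_simp
        ring
    _ ≤ ∑ i, v i ^ 2 := sum_le_sum fun i _ => pow_le_pow_left₀ (by positivity) (h i) 2

lemma Fin.sum_univ_add_three {M : Type*} [AddCommMonoid M] (k : ℕ) (f : Fin (k + 3) → M) :
    ∑ v, f v = f ⟨0, by simp⟩ + ∑ i : Fin k, f ⟨i + 1, by omega⟩ + f ⟨k + 1, by omega⟩
      + f ⟨k + 2, by simp⟩ := by
  rw [Fin.sum_univ_succ, Fin.sum_univ_castSucc, Fin.sum_univ_castSucc]
  simp only [add_assoc]
  rfl

/-- For `k ≥ 2` and `α = 1 - 1/k`, writing `r = (1 - 1/k)/3`, the PageRank vector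
satisfies `‖π‖₂² > π_A² + π_{C1}² + π_{C2}²·(1 - r^(2k))/(1 - r²)`. -/
theorem pagerank_sq_norm_lower_bound (k : ℕ) (hk : 2 ≤ k) (π : Fin (k + 3) → ℝ)
    (hπ : IsPageRank k (1 - 1 / (k : ℝ)) π) (r : ℝ) (hr : r = (1 - 1 / (k : ℝ)) / 3) :
    (∑ v, π v ^ 2) >
      π ⟨k + 2, by omega⟩ ^ 2 + π ⟨0, by omega⟩ ^ 2
        + π ⟨1, by omega⟩ ^ 2 * (1 - r ^ (2 * k)) / (1 - r ^ 2) := by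
  have hk_inv : 0 < 1 / (k : ℝ) ∧ 1 / (k : ℝ) ≤ 1 :=
    ⟨by positivity, by rw [div_le_one (by positivity)]; exact_mod_cast (by omega : 1 ≤ k)⟩
  have hα0 : 0 ≤ 1 - 1 / (k : ℝ) := by linarith
  have hα1 : 1 - 1 / (k : ℝ) < 1 := by linarith
  have hr0 : 0 ≤ r := by rw [hr]; linarith
  have hr1 : r ^ 2 < 1 := by rw [hr]; nlinarith
  have hgeom := sq_mul_geom_sum_le_sum_sq (v := fun i : Fin k => π ⟨i + 1, by omega⟩)
    (hπ.1 ⟨1, by omega⟩) hr0 hr1.ne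
    fun i : Fin k => hr ▸ hπ.pow_mul_le hα0 hα1.le i.2.le
  have hBk := hπ.apply_pos hα0 hα1 (i := k) (by omega) le_rfl
  rw [Fin.sum_univ_add_three]
  linarith [pow_pos hBk 2]
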